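/- arXiv:1705.09579 — 3 statements merged into one kernel-verified Lean document; each statement's English description precedes it below -/
import Mathlib

section
/- Let X be a metric space, p, q distinct points, Z a subset of X containing p and q, c ∈ (0,1] with E(x;p,q) := d(x,p) + d(x,q) - d(p,q) ≥ c·d(x,q) for all x ∈ Z \ {p,q}, and α ∈ (0,c). Define g: Z → ℝ by g(p) = d(p,q) and g(x) = (1-α)·d(x,q) for x ∈ Z \ {p}. Then g is 1-Lipschitz on Z, g(p) - g(q) = d(p,q), and |g(x) - g(y)| ≤ (1-α)·d(x,y) for all x, y ∈ Z \ {p}. -/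
/-!
Away from `p`, `g` is `(1 - α)` times the distance to `q`, hence `(1 - α)`-Lipschitz by the
triangle inequality. At `p`, the condition `E(y; p, q) ≥ c · d(y, q)` with `α ≤ c` gives
`d(p, q) ≤ d(p, y) + (1 - α) d(y, q)`, while `(1 - α) d(y, q) ≤ d(y, q) ≤ d(y, p) + d(p, q)`;
together these say `|g p - g y| ≤ d(p, y)`.
-/

section

variable {X : Type*} [PseudoMetricSpace X]

lemma abs_mul_dist_sub_mul_dist_le {k : ℝ} (hk : 0 ≤ k) (x y z : X) :
    |k * dist x z - k * dist y z| ≤ k * dist x y := by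
  rw [← mul_sub, abs_mul, abs_of_nonneg hk]
  exact mul_le_mul_of_nonneg_left (abs_dist_sub_le x y z) hk

lemma abs_dist_sub_mul_dist_le_of_excess {p q y : X} {c α : ℝ}
    (hE : c * dist y q ≤ dist y p + dist y q - dist p q) (hα0 : 0 ≤ α) (hαc : α ≤ c) :
    |dist p q - (1 - α) * dist y q| ≤ dist p y := by
  have hyq : 0 ≤ dist y q := dist_nonneg
  have htri : dist y q ≤ dist y p + dist p q := dist_triangle y p q
  rw [dist_comm p y, abs_sub_le_iff]
  constructor <;> nlinarith

lemma abs_sub_le_dist_of_diff_singleton {g : X → ℝ} {S : Set X} {p : X}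
    (hS : ∀ x ∈ S \ {p}, ∀ y ∈ S \ {p}, |g x - g y| ≤ dist x y)
    (hp : ∀ y ∈ S \ {p}, |g p - g y| ≤ dist p y) :
    ∀ x ∈ S, ∀ y ∈ S, |g x - g y| ≤ dist x y := by
  intro x hx y hy
  rcases eq_or_ne x p with rfl | hxp
  · rcases eq_or_ne y x with rfl | hyx
    · simp
    · exact hp y ⟨hy, hyx⟩
  · rcases eq_or_ne y p with rfl | hyp
    · rw [abs_sub_comm, dist_comm]
      exact hp x ⟨hx, hxp⟩
    · exact hS x ⟨hx, hxp⟩ y ⟨hy, hyp⟩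

end

theorem g_lipschitz_on_Z_general {X : Type*} [MetricSpace X]
    (p q : X) (hpq : p ≠ q) (Z : Set X)
    (c : ℝ) (hc1 : c ≤ 1)
    (hE : ∀ x ∈ Z \ {p, q}, c * dist x q ≤ dist x p + dist x q - dist p q)
    (α : ℝ) (hα0 : 0 < α) (hαc : α < c)
    (g : X → ℝ) (hgp : g p = dist p q)
    (hg : ∀ x, x ≠ p → g x = (1 - α) * dist x q) :
    (∀ x ∈ Z, ∀ y ∈ Z, |g x - g y| ≤ dist x y) ∧
    g p - g q = dist p q ∧
    (∀ x ∈ Z \ {p}, ∀ y ∈ Z \ {p}, |g x - g y| ≤ (1 - α) * dist x y) := by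
  have hgq : g q = 0 := by rw [hg q hpq.symm, dist_self, mul_zero]
  have hE' : ∀ y ∈ Z \ {p}, c * dist y q ≤ dist y p + dist y q - dist p q := by
    rintro y ⟨hyZ, hyp⟩
    rcases eq_or_ne y q with rfl | hyq
    · simp [dist_comm]
    · exact hE y ⟨hyZ, by simp_all⟩
  have hcontr : ∀ x ∈ Z \ {p}, ∀ y ∈ Z \ {p}, |g x - g y| ≤ (1 - α) * dist x y := by
    rintro x ⟨-, hxp⟩ y ⟨-, hyp⟩
    rw [hg x hxp, hg y hyp]
    exact abs_mul_dist_sub_mul_dist_le (by linarith) x y q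
  refine ⟨abs_sub_le_dist_of_diff_singleton (p := p) (fun x hx y hy => ?_) (fun y hy => ?_),
    by rw [hgq, hgp, sub_zero], hcontr⟩
  · exact (hcontr x hx y hy).trans (mul_le_of_le_one_left dist_nonneg (by linarith))
  · rw [hgp, hg y hy.2]
    exact abs_dist_sub_mul_dist_le_of_excess (hE' y hy) hα0.le hαc.le

theorem g_lipschitz_on_Z {X : Type*} [MetricSpace X]
    (p q : X) (hpq : p ≠ q) (Z : Set X) (hp : p ∈ Z) (hq : q ∈ Z)
    (c : ℝ) (hc0 : 0 < c) (hc1 : c ≤ 1)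
    (hE : ∀ x ∈ Z \ {p, q}, c * dist x q ≤ dist x p + dist x q - dist p q)
    (α : ℝ) (hα0 : 0 < α) (hαc : α < c)
    (g : X → ℝ) (hgp : g p = dist p q)
    (hg : ∀ x, x ≠ p → g x = (1 - α) * dist x q) :
    (∀ x ∈ Z, ∀ y ∈ Z, |g x - g y| ≤ dist x y) ∧
    g p - g q = dist p q ∧
    (∀ x ∈ Z \ {p}, ∀ y ∈ Z \ {p}, |g x - g y| ≤ (1 - α) * dist x y) :=
  g_lipschitz_on_Z_general p q hpq Z c hc1 hE α hα0 hαc g hgp hg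
end

section
/- Let X be a metric space, p, q distinct points, and (q_n) a sequence in X \ {q} with d(q_n,q) strictly decreasing, d(q_{n+1},q)/d(q_n,q) → 0, and E(q_n;p,q)/d(q_n,q) → 0, where E(r;p,q) = d(r,p) + d(r,q) - d(p,q). Then for every 1-Lipschitz function f: X → ℝ with f(p) - f(q) = d(p,q), we have (f(q_n) - f(q_{n+1}))/d(q_n,q_{n+1}) → 1. -/
/-!
Along the sequence, a norm-attaining 1-Lipschitz `f` behaves like `dist · q` up to the excess:
`|f x - f q - d(x, q)| ≤ E(x; p, q)`. Hence `f (q n) - f q = d(q n, q) (1 + o(1))`, while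
`|f (q (n+1)) - f q| ≤ d(q (n+1), q) = o(d(q n, q))` and, by the triangle inequality,
`d(q n, q (n+1)) = d(q n, q) (1 + o(1))`; dividing gives the limit `1`.
-/

open Filter Topology

section

variable {ι : Type*} {l : Filter ι}

theorem tendsto_div_of_abs_sub_le {a b r : ι → ℝ} (hr : ∀ i, 0 < r i)
    (hab : ∀ i, |a i - r i| ≤ b i) (hb : Tendsto (fun i => b i / r i) l (𝓝 0)) :
    Tendsto (fun i => a i / r i) l (𝓝 1) := by
  have hbound : ∀ i, ‖a i / r i - 1‖ ≤ b i / r i := fun i => by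
    rw [Real.norm_eq_abs, div_sub_one (hr i).ne', abs_div, abs_of_pos (hr i)]
    exact div_le_div_of_nonneg_right (hab i) (hr i).le
  simpa using (squeeze_zero_norm hbound hb).add_const 1

section Metric

variable {X : Type*}

def excess [PseudoMetricSpace X] (p q r : X) : ℝ := dist r p + dist r q - dist p q

theorem abs_sub_sub_dist_le_excess [PseudoMetricSpace X] {f : X → ℝ} (hf : LipschitzWith 1 f)
    {p q : X} (hfpq : f p - f q = dist p q) (x : X) :
    |f x - f q - dist x q| ≤ excess p q x := by
  have hxq : f x ≤ f q + dist x q := by simpa using hf.le_add_mul x q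
  have hpx : f p ≤ f x + dist p x := by simpa using hf.le_add_mul p x
  have htri := dist_triangle p x q
  rw [dist_comm p x] at hpx htri
  rw [abs_le, excess]
  constructor <;> linarith

variable [MetricSpace X]

theorem tendsto_sub_div_dist_of_tendsto_excess_div {f : X → ℝ} (hf : LipschitzWith 1 f)
    {p q : X} (hfpq : f p - f q = dist p q) {x y : ι → X} (hx : ∀ i, x i ≠ q)
    (hE : Tendsto (fun i => excess p q (x i) / dist (x i) q) l (𝓝 0))
    (hy : Tendsto (fun i => dist (y i) q / dist (x i) q) l (𝓝 0)) :
    Tendsto (fun i => (f (x i) - f (y i)) / dist (x i) (y i)) l (𝓝 1) := by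
  have hr : ∀ i, 0 < dist (x i) q := fun i => dist_pos.2 (hx i)
  have hfx : Tendsto (fun i => (f (x i) - f q) / dist (x i) q) l (𝓝 1) :=
    tendsto_div_of_abs_sub_le hr (fun i => abs_sub_sub_dist_le_excess hf hfpq (x i)) hE
  have hfy : Tendsto (fun i => (f (y i) - f q) / dist (x i) q) l (𝓝 0) := by
    refine squeeze_zero_norm (fun i => ?_) hy
    rw [Real.norm_eq_abs, abs_div, abs_of_pos (hr i), ← Real.dist_eq]
    exact div_le_div_of_nonneg_right (by simpa using hf.dist_le_mul (y i) q) (hr i).le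
  have hxy : Tendsto (fun i => dist (x i) (y i) / dist (x i) q) l (𝓝 1) := by
    refine tendsto_div_of_abs_sub_le hr (fun i => ?_) hy
    simpa only [dist_comm (x i)] using abs_dist_sub_le (y i) q (x i)
  have hquot := (hfx.sub hfy).div hxy one_ne_zero
  rw [sub_zero, div_one] at hquot
  refine hquot.congr fun i => ?_
  rw [Pi.div_apply, ← sub_div, sub_sub_sub_cancel_right, div_div_div_cancel_right₀ (hr i).ne']

end Metric

end

theorem norm_attaining_quotient_tendsto_one_general {X : Type*} [MetricSpace X]
    (p q : X) (qs : ℕ → X) (hne : ∀ n, qs n ≠ q)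
    (hratio : Tendsto (fun n => dist (qs (n + 1)) q / dist (qs n) q) atTop (𝓝 0))
    (hE : Tendsto
      (fun n => (dist (qs n) p + dist (qs n) q - dist p q) / dist (qs n) q)
      atTop (𝓝 0)) :
    ∀ f : X → ℝ, (∀ x y : X, |f x - f y| ≤ dist x y) → f p - f q = dist p q →
      Tendsto (fun n => (f (qs n) - f (qs (n + 1))) / dist (qs n) (qs (n + 1)))
        atTop (𝓝 1) := by
  intro f hf hfpq
  have hlip : LipschitzWith 1 f := .mk_one fun x y => (Real.dist_eq _ _).trans_le (hf x y)
  exact tendsto_sub_div_dist_of_tendsto_excess_div hlip hfpq hne hE hratio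

theorem norm_attaining_quotient_tendsto_one {X : Type*} [MetricSpace X]
    (p q : X) (hpq : p ≠ q) (qs : ℕ → X) (hne : ∀ n, qs n ≠ q)
    (hdec : StrictAnti (fun n => dist (qs n) q))
    (hratio : Tendsto (fun n => dist (qs (n + 1)) q / dist (qs n) q) atTop (𝓝 0))
    (hE : Tendsto
      (fun n => (dist (qs n) p + dist (qs n) q - dist p q) / dist (qs n) q)
      atTop (𝓝 0)) :
    ∀ f : X → ℝ, (∀ x y : X, |f x - f y| ≤ dist x y) → f p - f q = dist p q →
      Tendsto (fun n => (f (qs n) - f (qs (n + 1))) / dist (qs n) (qs (n + 1)))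
        atTop (𝓝 1) :=
  norm_attaining_quotient_tendsto_one_general p q qs hne hratio hE
end

section
/- Consider the subset X of c₀ consisting of 0, p = 2e₁, and q_n = e₁ + (1 + 1/n)·e_n for n ≥ 2, where (e_n) is the canonical basis. Then: (a) ‖q_n - q_m‖ > 1 for all distinct n, m ≥ 2, so (q_n) has no convergent subsequence and X is not compact; (b) ‖q_n - p‖ + ‖q_n - 0‖ - ‖p - 0‖ = 2/n for all n ≥ 2; hence the infimum over r ∈ X \ {0, p} of ‖r - p‖ + ‖r‖ - 2 is zero while no point of X lies strictly between 0 and p. -/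
open Filter Topology

/-- The canonical basis vectors of c₀ = C₀(ℕ, ℝ). -/
noncomputable def c0e (n : ℕ) : ZeroAtInftyContinuousMap ℕ ℝ where
  toFun := Pi.single n 1
  continuous_toFun := continuous_of_discreteTopology
  zero_at_infty' := by
    rw [Filter.cocompact_eq_cofinite]
    refine Filter.Tendsto.congr' ?_ tendsto_const_nhds
    have h : ∀ᶠ k in Filter.cofinite, k ≠ n :=
      Filter.eventually_cofinite.2 (by simp)
    filter_upwards [h] with k hk
    exact (Pi.single_eq_of_ne (M := fun _ : ℕ => ℝ) hk 1).symm


/-! The points `q n - q m = (1 + 1/n) e_n - (1 + 1/m) e_m` have norm `max (1 + 1/n) (1 + 1/m) > 1`,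
so `(q n)` is `1`-separated and has no Cauchy subsequence. Both `q n - p = -e₁ + (1 + 1/n) e_n` and
`q n = e₁ + (1 + 1/n) e_n` have norm `1 + 1/n`, so the triangle-inequality defect through `q n` is
`2/n`: positive for every `n`, yet with infimum `0`. -/

open ZeroAtInfty

namespace ZeroAtInftyContinuousMap

variable {α β : Type*} [TopologicalSpace α] [SeminormedAddCommGroup β]

theorem norm_apply_le (f : C₀(α, β)) (x : α) : ‖f x‖ ≤ ‖f‖ :=
  f.toBCF.norm_coe_le_norm x

theorem norm_le {f : C₀(α, β)} {C : ℝ} (hC : 0 ≤ C) : ‖f‖ ≤ C ↔ ∀ x, ‖f x‖ ≤ C :=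
  f.toBCF.norm_le hC

end ZeroAtInftyContinuousMap

open ZeroAtInftyContinuousMap

theorem not_cauchySeq_of_pairwise_le_dist {α : Type*} [PseudoMetricSpace α] {u : ℕ → α} {ε : ℝ}
    (hε : 0 < ε) (hu : Pairwise fun k l => ε ≤ dist (u k) (u l)) : ¬ CauchySeq u := by
  intro hu_cauchy
  obtain ⟨N, hN⟩ := Metric.cauchySeq_iff'.1 hu_cauchy ε hε
  exact (hu N.succ_ne_self).not_gt (hN (N + 1) N.le_succ)

theorem not_isCompact_of_pairwise_le_dist {α : Type*} [PseudoMetricSpace α] {s : Set α}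
    {u : ℕ → α} {ε : ℝ} (hε : 0 < ε) (hu : Pairwise fun k l => ε ≤ dist (u k) (u l))
    (hus : ∀ n, u n ∈ s) : ¬ IsCompact s := fun hs => by
  obtain ⟨x, -, φ, hφ, hlim⟩ := hs.tendsto_subseq hus
  exact not_cauchySeq_of_pairwise_le_dist hε (hu.comp_of_injective hφ.injective) hlim.cauchySeq

theorem csInf_eq_of_forall_le_of_tendsto {α ι : Type*} [ConditionallyCompleteLinearOrder α]
    [TopologicalSpace α] [OrderTopology α] {l : Filter ι} [l.NeBot] {s : Set α} {u : ι → α}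
    {a : α} (hs : ∀ t ∈ s, a ≤ t) (hu : ∀ᶠ i in l, u i ∈ s) (hlim : Tendsto u l (𝓝 a)) :
    sInf s = a :=
  have ⟨i, hi⟩ := hu.exists
  (isGLB_of_mem_closure hs (mem_closure_of_tendsto hlim hu)).csInf_eq ⟨u i, hi⟩

theorem coe_c0e (n : ℕ) : ⇑(c0e n) = Pi.single n 1 := rfl

theorem norm_c0e (n : ℕ) : ‖c0e n‖ = 1 := by
  refine le_antisymm ((norm_le zero_le_one).2 fun k => ?_) ?_
  · rcases eq_or_ne k n with rfl | hk <;> simp [coe_c0e, *]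
  · simpa [coe_c0e] using norm_apply_le (c0e n) n

theorem norm_smul_c0e_add_smul_c0e {m n : ℕ} (h : m ≠ n) (a b : ℝ) :
    ‖a • c0e m + b • c0e n‖ = max |a| |b| := by
  set f := a • c0e m + b • c0e n
  have hf : ∀ k, f k = a * (Pi.single m 1 : ℕ → ℝ) k + b * (Pi.single n 1 : ℕ → ℝ) k := fun k => by
    simp [f, coe_c0e]
  refine le_antisymm ((norm_le (le_max_of_le_left (abs_nonneg a))).2 fun k => ?_) ?_
  · rcases eq_or_ne k m with rfl | hkm
    · simp [hf, h]
    rcases eq_or_ne k n with rfl | hkn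
    · simp [hf, hkm]
    · simp [hf, hkm, hkn]
  · have hfm : ‖f m‖ = |a| := by simp [hf, h]
    have hfn : ‖f n‖ = |b| := by simp [hf, h.symm]
    exact max_le (hfm ▸ norm_apply_le f m) (hfn ▸ norm_apply_le f n)

theorem norm_c0e_add_smul_c0e {m n : ℕ} (h : m ≠ n) {t : ℝ} (ht : 1 ≤ t) :
    ‖c0e m + t • c0e n‖ = t := by
  simpa [abs_of_pos (zero_lt_one.trans_le ht), ht] using norm_smul_c0e_add_smul_c0e h 1 t

theorem norm_c0e_add_smul_c0e_sub_two_smul {m n : ℕ} (h : m ≠ n) {t : ℝ} (ht : 1 ≤ t) :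
    ‖c0e m + t • c0e n - (2 : ℝ) • c0e m‖ = t := by
  have : c0e m + t • c0e n - (2 : ℝ) • c0e m = (-1 : ℝ) • c0e m + t • c0e n := by module
  simpa [this, abs_of_pos (zero_lt_one.trans_le ht), ht] using norm_smul_c0e_add_smul_c0e h (-1) t

theorem one_lt_norm_sub_of_ne {k n m : ℕ} (hn : n ≠ 0) (hnm : n ≠ m) :
    1 < ‖c0e k + (1 + 1 / (n : ℝ)) • c0e n - (c0e k + (1 + 1 / (m : ℝ)) • c0e m)‖ := by
  have hsub : c0e k + (1 + 1 / (n : ℝ)) • c0e n - (c0e k + (1 + 1 / (m : ℝ)) • c0e m) =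
      (1 + 1 / (n : ℝ)) • c0e n + (-(1 + 1 / (m : ℝ))) • c0e m := by
    module
  rw [hsub, norm_smul_c0e_add_smul_c0e hnm]
  exact lt_max_of_lt_left (lt_abs.2 (Or.inl (lt_add_of_pos_right 1 (by positivity))))

theorem norm_c0e_add_smul_c0e_sub_two_smul_add_norm {m n : ℕ} (h : m ≠ n) {t : ℝ} (ht : 1 ≤ t) :
    ‖c0e m + t • c0e n - (2 : ℝ) • c0e m‖ + ‖c0e m + t • c0e n‖ = 2 * t := by
  rw [norm_c0e_add_smul_c0e_sub_two_smul h ht, norm_c0e_add_smul_c0e h ht, two_mul]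

theorem c0_noncompact_example :
    let p : ZeroAtInftyContinuousMap ℕ ℝ := (2 : ℝ) • c0e 1
    let qs : ℕ → ZeroAtInftyContinuousMap ℕ ℝ :=
      fun n => c0e 1 + (1 + 1 / (n : ℝ)) • c0e n
    let X : Set (ZeroAtInftyContinuousMap ℕ ℝ) :=
      {0, p} ∪ {x | ∃ n, 2 ≤ n ∧ x = qs n}
    (∀ n m, 2 ≤ n → 2 ≤ m → n ≠ m → 1 < ‖qs n - qs m‖) ∧
    (¬ ∃ φ : ℕ → ℕ, StrictMono φ ∧ (∀ k, 2 ≤ φ k) ∧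
        ∃ x, Tendsto (qs ∘ φ) atTop (𝓝 x)) ∧
    ¬ IsCompact X ∧
    (∀ n, 2 ≤ n → ‖qs n - p‖ + ‖qs n - 0‖ - ‖p - 0‖ = 2 / (n : ℝ)) ∧
    sInf {t : ℝ | ∃ r ∈ X \ ({0, p} : Set (ZeroAtInftyContinuousMap ℕ ℝ)),
        t = ‖r - p‖ + ‖r‖ - 2} = 0 ∧
    (∀ r ∈ X, r ≠ 0 → r ≠ p → ‖r - p‖ + ‖r‖ ≠ ‖p - 0‖) := by
  intro p qs X
  have hsep : ∀ n m, 2 ≤ n → 2 ≤ m → n ≠ m → 1 < ‖qs n - qs m‖ :=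
    fun n m hn _ hnm => one_lt_norm_sub_of_ne (by omega) hnm
  have hsep_comp (φ : ℕ → ℕ) (hφ : φ.Injective) (hφ2 : ∀ k, 2 ≤ φ k) :
      Pairwise fun k l => 1 ≤ dist (qs (φ k)) (qs (φ l)) := fun k l hkl =>
    (hsep _ _ (hφ2 k) (hφ2 l) (hφ.ne hkl)).le.trans_eq (dist_eq_norm _ _).symm
  have hp : ‖p‖ = 2 := by simp [p, norm_smul, norm_c0e]
  have hsum (n : ℕ) (hn : 2 ≤ n) : ‖qs n - p‖ + ‖qs n‖ = 2 + 2 / n :=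
    (norm_c0e_add_smul_c0e_sub_two_smul_add_norm (by omega : 1 ≠ n)
      (le_add_of_nonneg_right (by positivity))).trans (by ring)
  have hpos (n : ℕ) (hn : 2 ≤ n) : (0 : ℝ) < 2 / n := by positivity
  have hends : ∀ r ∈ ({0, p} : Set (ZeroAtInftyContinuousMap ℕ ℝ)), ‖r - p‖ + ‖r‖ = 2 := by
    rintro r (rfl | rfl) <;> simp [hp]
  have hdiff : X \ {0, p} = {x | ∃ n, 2 ≤ n ∧ x = qs n} := by
    rw [Set.union_sdiff_left, sdiff_eq_left, Set.disjoint_left]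
    rintro _ ⟨n, hn, rfl⟩ hr
    linarith [hends _ hr, hsum n hn, hpos n hn]
  refine ⟨hsep, ?_, ?_, fun n hn => ?_, ?_, ?_⟩
  · rintro ⟨φ, hφ, hφ2, x, hx⟩
    exact not_cauchySeq_of_pairwise_le_dist one_pos (hsep_comp φ hφ.injective hφ2) hx.cauchySeq
  · exact not_isCompact_of_pairwise_le_dist one_pos (hsep_comp (· + 2) (add_left_injective 2)
      (by simp)) fun k => Or.inr ⟨k + 2, by omega, rfl⟩
  · rw [sub_zero, sub_zero, hp, hsum n hn]
    ring
  · refine csInf_eq_of_forall_le_of_tendsto ?_ ((eventually_ge_atTop 2).mono fun n hn => ?_)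
      (tendsto_const_div_atTop_nhds_zero_nat 2)
    · rintro t ⟨r, hr, rfl⟩
      obtain ⟨n, hn, rfl⟩ := hdiff ▸ hr
      linarith [hsum n hn, hpos n hn]
    · exact ⟨qs n, hdiff ▸ ⟨n, hn, rfl⟩, by rw [hsum n hn]; ring⟩
  · rintro r (hr | ⟨n, hn, rfl⟩) hr0 hrp
    · rcases hr with rfl | rfl <;> contradiction
    · rw [sub_zero, hp, hsum n hn]
      linarith [hpos n hn]
end
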